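/- The sequence N(m) = m + log(m!) − m·ψ(m+1) is strictly increasing in m for integers m ≥ 0. -/

import Mathlib

open Real Finset

/-- The digamma function at the positive integer `m + 1`:
`ψ(m+1) = -γ + Σ_{k=1}^m 1/k`. -/
noncomputable def psiSucc (m : ℕ) : ℝ :=
  -Real.eulerMascheroniConstant + ∑ k ∈ Finset.range m, (1 : ℝ) / (k + 1)

/-- `N(m) = m + log(m!) − m·ψ(m+1)`. -/
noncomputable def Nfock (m : ℕ) : ℝ :=
  m + Real.log (Nat.factorial m) - m * psiSucc m

/-! Telescoping gives `N(m+1) - N(m) = log(m+1) - ψ(m+1)`, and `ψ(m+1) = H_m - γ < log(m+1)`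
because the sequence `H_m - log(m+1)` increases strictly to `γ`. -/

lemma psiSucc_eq_harmonic_sub (m : ℕ) : psiSucc m = harmonic m - eulerMascheroniConstant := by
  simp only [psiSucc, harmonic, one_div]
  push_cast
  ring

lemma psiSucc_succ (m : ℕ) : psiSucc (m + 1) = psiSucc m + 1 / (m + 1) := by
  simp only [psiSucc, sum_range_succ]
  ring

lemma psiSucc_lt_log_succ (m : ℕ) : psiSucc m < log (m + 1) := by
  have h := eulerMascheroniSeq_lt_eulerMascheroniConstant m
  rw [eulerMascheroniSeq] at h
  rw [psiSucc_eq_harmonic_sub]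
  linarith

lemma log_factorial_succ (m : ℕ) :
    log (m + 1).factorial = log (m + 1) + log m.factorial := by
  rw [Nat.factorial_succ, Nat.cast_mul, Nat.cast_succ,
    log_mul (by positivity) (by exact_mod_cast m.factorial_ne_zero)]

lemma Nfock_succ_sub (m : ℕ) : Nfock (m + 1) - Nfock m = log (m + 1) - psiSucc m := by
  have hm : (m : ℝ) + 1 ≠ 0 := by positivity
  simp only [Nfock, log_factorial_succ, psiSucc_succ, Nat.cast_succ]
  field_simp
  ring

theorem fock_nonclassicality_strictMono : StrictMono Nfock :=
  strictMono_nat_of_lt_succ fun m ↦ by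
    linarith [Nfock_succ_sub m, psiSucc_lt_log_succ m]
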